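/- Let A be a clone over ℕ. Define on A^ℕ = (ℕ → A) the pointwise multiplication (f·g)(i) = (f i)[g] and the operation (f∘g)(i) = (f i)[x_1, g 1, g 2, g 3, …] (i.e. (f∘g)(i) = (f i)[h] where h 1 = x_1 and h (j+1) = g j). Then: (1) (A^ℕ, ·) is a monoid with unit x (where x i = x_i); (2) (A^ℕ, ∘) is a monoid with unit the shift sequence (x_2, x_3, x_4, …); (3) f·(g∘h) = (f·g)∘h for all f, g, h ∈ A^ℕ. Hence (A^ℕ, ·, ∘) is a Kleisli algebra (a set with two monoid structures satisfying the mixed associativity law f·(g∘h) = (f·g)∘h). -/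
import Mathlib


/-- A clone over the positive integers ℕ = {1,2,3,…}: a set `A` with a substitution
operation `a[f]` and distinguished elements `x i`, satisfying the clone laws. -/
structure CloneN (A : Type*) where
  sub : A → (ℕ+ → A) → A
  x : ℕ+ → A
  sub_assoc : ∀ (a : A) (f g : ℕ+ → A), sub (sub a f) g = sub a (fun i => sub (f i) g)
  sub_x : ∀ a : A, sub a x = a
  x_sub : ∀ (i : ℕ+) (f : ℕ+ → A), sub (x i) f = f i

/-- The pointwise multiplication `(f·g)(i) = (f i)[g]` on `A^ℕ`. -/
def CloneN.mul {A : Type*} (C : CloneN A) (f g : ℕ+ → A) : ℕ+ → A :=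
  fun i => C.sub (f i) g

/-- `consSeq a g` is the sequence whose value at position `1` is `a` and whose value
at position `j+1` is `g j`. -/
def consSeq {A : Type*} (a : A) (g : ℕ+ → A) : ℕ+ → A :=
  fun j => if j = 1 then a else g (j - 1)

/-- The operation `(f∘g)(i) = (f i)[x_1, g 1, g 2, g 3, …]` on `A^ℕ`. -/
def CloneN.comp {A : Type*} (C : CloneN A) (f g : ℕ+ → A) : ℕ+ → A :=
  fun i => C.sub (f i) (consSeq (C.x 1) g)

/-- The shift sequence `(x_2, x_3, x_4, …)`. -/
def shiftSeq {A : Type*} (C : CloneN A) : ℕ+ → A := fun i => C.x (i + 1)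

/-- `(A^ℕ, ·)` is a monoid with unit `x`, `(A^ℕ, ∘)` is a monoid with unit the shift
sequence, and `f·(g∘h) = (f·g)∘h`; hence `(A^ℕ, ·, ∘)` is a Kleisli algebra. -/
theorem clone_power_is_kleisli_algebra {A : Type*} (C : CloneN A) :
    (∀ f g h : ℕ+ → A, C.mul (C.mul f g) h = C.mul f (C.mul g h)) ∧
    (∀ f : ℕ+ → A, C.mul C.x f = f) ∧
    (∀ f : ℕ+ → A, C.mul f C.x = f) ∧
    (∀ f g h : ℕ+ → A, C.comp (C.comp f g) h = C.comp f (C.comp g h)) ∧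
    (∀ f : ℕ+ → A, C.comp (shiftSeq C) f = f) ∧
    (∀ f : ℕ+ → A, C.comp f (shiftSeq C) = f) ∧
    (∀ f g h : ℕ+ → A, C.mul f (C.comp g h) = C.comp (C.mul f g) h) := by
  have hsub : ∀ j : ℕ+, j ≠ 1 → j - 1 + 1 = j := fun j hj =>
    PNat.sub_add_of_lt (lt_of_le_of_ne j.one_le (Ne.symm hj))
  have hcons : ∀ (a : A) (g : ℕ+ → A), consSeq a g = fun j => if j = 1 then a else g (j - 1) :=
    fun a g => rfl
  have hcons1 : ∀ (a : A) (g : ℕ+ → A), consSeq a g 1 = a := fun a g => rfl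
  have hconsS : ∀ (a : A) (g : ℕ+ → A) (j : ℕ+), j ≠ 1 → consSeq a g j = g (j - 1) := by
    intro a g j hj; simp [consSeq, hj]
  refine ⟨?_, ?_, ?_, ?_, ?_, ?_, ?_⟩
  · intro f g h; funext i; exact C.sub_assoc (f i) g h
  · intro f; funext i; exact C.x_sub i f
  · intro f; funext i; exact C.sub_x (f i)
  · intro f g h
    funext i
    show C.sub (C.sub (f i) (consSeq (C.x 1) g)) _ = C.sub (f i) _
    rw [C.sub_assoc]
    congr 1
    funext j
    by_cases hj : j = 1
    · subst hj
      rw [hcons1, C.x_sub]; exact (hcons1 _ _).symm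
    · rw [hconsS _ _ _ hj, hconsS _ _ _ hj]
      rfl
  · intro f
    funext i
    show C.sub (C.x (i + 1)) (consSeq (C.x 1) f) = f i
    rw [C.x_sub, hconsS _ _ _ (by intro h; simpa using congrArg PNat.val h)]
    congr 1
    exact PNat.add_sub
  · intro f
    funext i
    show C.sub (f i) (consSeq (C.x 1) (shiftSeq C)) = f i
    have : consSeq (C.x 1) (shiftSeq C) = C.x := by
      funext j
      by_cases hj : j = 1
      · subst hj; rfl
      · rw [hconsS _ _ _ hj]; show C.x (j - 1 + 1) = C.x j; rw [hsub j hj]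
    rw [this, C.sub_x]
  · intro f g h
    funext i
    show C.sub (f i) (fun j => C.sub (g j) (consSeq (C.x 1) h)) = C.sub (C.sub (f i) g) (consSeq (C.x 1) h)
    rw [C.sub_assoc]
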